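/- arXiv:1510.03707 — 3 statements merged into one kernel-verified Lean document; each statement's English description precedes it below -/
import Mathlib

section
/- Let V be a finite-dimensional real vector space with a skew-symmetric bilinear form ⟨,⟩, and let φ : V → V* be the map v ↦ ⟨v,·⟩. For a subspace R ⊆ V*, the following are equivalent: (1) R ∩ Im(φ) is coisotropic in Im(φ) (with the symplectic form transferred from V/ker φ); (2) the annihilator Ann(R) = {v ∈ V : r(v) = 0 for all r ∈ R} is isotropic for ⟨,⟩. -/
/-!
In finite dimension `R` is the annihilator of `Ann R`, so `B u ∈ R` exactly when `B u` kills
`Ann R`. Hence `Ann R` is isotropic iff `B` maps `Ann R` into `R`. Skew-symmetry shows that every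
`x ∈ Ann R` is `B`-orthogonal to `φ⁻¹(R)`, so coisotropy puts `B x` in `R`; conversely, if
`B (Ann R) ⊆ R`, then any `u` orthogonal to `φ⁻¹(R)` is orthogonal to `Ann R`, so `B u ∈ R`.
-/

namespace Subspace

variable {K V : Type*} [Field K] [AddCommGroup V] [Module K V]

theorem mem_iff_forall_mem_dualCoannihilator {R : Subspace K (Module.Dual K V)}
    [FiniteDimensional K R] {f : Module.Dual K V} :
    f ∈ R ↔ ∀ x ∈ R.dualCoannihilator, f x = 0 := by
  conv_lhs => rw [← dualCoannihilator_dualAnnihilator_eq (W := R)]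
  exact Submodule.mem_dualAnnihilator f

theorem dualCoannihilator_isotropic_iff_mapsTo {R : Subspace K (Module.Dual K V)}
    [FiniteDimensional K R] (B : V →ₗ[K] Module.Dual K V) :
    (∀ x ∈ R.dualCoannihilator, ∀ y ∈ R.dualCoannihilator, B x y = 0) ↔
      ∀ x ∈ R.dualCoannihilator, B x ∈ R := by
  simp only [mem_iff_forall_mem_dualCoannihilator]

end Subspace

/-- For a finite-dimensional real vector space `V` with a skew-symmetric bilinear
form `B` (viewed as the map `φ = B : V →ₗ Dual V`, `φ v = ⟨v, ·⟩`), and a subspace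
`R` of the dual, the following are equivalent:
(1) `R ∩ Im φ` is coisotropic in `Im φ` with the transferred symplectic form
    (for which `⟨φ u, φ v⟩ = B u v`);
(2) the annihilator `Ann R = {v : r v = 0 ∀ r ∈ R}` is isotropic for `B`. -/
theorem coisotropic_iff_annihilator_isotropic
    (V : Type*) [AddCommGroup V] [Module ℝ V] [FiniteDimensional ℝ V]
    (B : V →ₗ[ℝ] Module.Dual ℝ V)
    (hskew : ∀ u v : V, B u v = - B v u)
    (R : Submodule ℝ (Module.Dual ℝ V)) :
    (∀ u : V, (∀ v : V, B v ∈ R → B u v = 0) → B u ∈ R) ↔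
      (∀ x ∈ R.dualCoannihilator, ∀ y ∈ R.dualCoannihilator, B x y = 0) := by
  rw [Subspace.dualCoannihilator_isotropic_iff_mapsTo]
  constructor
  · intro hcoiso x hx
    refine hcoiso x fun v hv => ?_
    rw [hskew, (Submodule.mem_dualCoannihilator x).mp hx (B v) hv, neg_zero]
  · intro hmaps u hu
    rw [Subspace.mem_iff_forall_mem_dualCoannihilator]
    exact fun y hy => hu y (hmaps y hy)
end

section
/- Let V be a finite-dimensional symplectic vector space over ℝ and let R ⊆ V* be a subspace. If R is a maximal poor subspace (i.e. Ann(R) is not isotropic, but Ann(R') is isotropic for every subspace R' strictly containing R), then R has codimension 2 in V*. -/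
/-!
Passing to annihilators reverses inclusions, so `Ann R` is a minimal non-isotropic subspace
of `V`. Such a subspace contains `x, y` with `B x y ≠ 0`; these are independent because `B`
is alternating, and their span is already non-isotropic, hence equals `Ann R`. So `Ann R` is
a plane, and `dim R = dim V - dim Ann R = dim V* - 2`.
-/

open Module

namespace LinearMap

variable {K V : Type*} [Field K] [AddCommGroup V] [Module K V]

def IsIsotropic (B : V →ₗ[K] V →ₗ[K] K) (W : Submodule K V) : Prop :=
  ∀ x ∈ W, ∀ y ∈ W, B x y = 0

theorem IsAlt.linearIndependent_pair {B : V →ₗ[K] V →ₗ[K] K} (hB : B.IsAlt) {x y : V}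
    (hxy : B x y ≠ 0) : LinearIndependent K ![x, y] := by
  have hx : x ≠ 0 := by rintro rfl; simp at hxy
  refine (LinearIndependent.pair_iff' hx).mpr fun a hax => hxy ?_
  rw [← hax, map_smul, smul_eq_mul, hB.self_eq_zero, mul_zero]

theorem IsAlt.finrank_eq_two_of_minimal_not_isIsotropic {B : V →ₗ[K] V →ₗ[K] K}
    (hB : B.IsAlt) {W : Submodule K V} (hW : ¬ B.IsIsotropic W)
    (hmin : ∀ W' < W, B.IsIsotropic W') : finrank K W = 2 := by
  simp only [IsIsotropic, not_forall] at hW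
  obtain ⟨x, hx, y, hy, hxy⟩ := hW
  have hspan_le : Submodule.span K (Set.range ![x, y]) ≤ W := by
    rw [Submodule.span_le, Set.range_subset_iff]
    exact Fin.forall_fin_two.mpr ⟨hx, hy⟩
  have hspan_eq : Submodule.span K (Set.range ![x, y]) = W := by
    refine hspan_le.eq_of_not_lt fun hlt => hxy (hmin _ hlt x ?_ y ?_)
    · exact Submodule.subset_span ⟨0, rfl⟩
    · exact Submodule.subset_span ⟨1, rfl⟩
  rw [← hspan_eq, finrank_span_eq_card (hB.linearIndependent_pair hxy), Fintype.card_fin]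

end LinearMap

namespace Submodule

variable {K V : Type*} [Field K] [AddCommGroup V] [Module K V]

theorem lt_dualAnnihilator_of_lt_dualCoannihilator {R : Submodule K (Dual K V)}
    {W : Submodule K V} (hW : W < R.dualCoannihilator) : R < W.dualAnnihilator := by
  refine lt_of_le_of_ne (le_dualAnnihilator_iff_le_dualCoannihilator.mpr hW.le) fun h => ?_
  rw [h, Subspace.dualAnnihilator_dualCoannihilator_eq] at hW
  exact lt_irrefl W hW

end Submodule

open LinearMap Submodule in
theorem maximal_poor_codim_two_general
    (V : Type*) [AddCommGroup V] [Module ℝ V] [FiniteDimensional ℝ V]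
    (B : V →ₗ[ℝ] V →ₗ[ℝ] ℝ)
    (hskew : ∀ u v : V, B u v = - B v u)
    (R : Submodule ℝ (Module.Dual ℝ V))
    (hpoor : ¬ (∀ x ∈ R.dualCoannihilator, ∀ y ∈ R.dualCoannihilator, B x y = 0))
    (hmax : ∀ R' : Submodule ℝ (Module.Dual ℝ V), R < R' →
      (∀ x ∈ R'.dualCoannihilator, ∀ y ∈ R'.dualCoannihilator, B x y = 0)) :
    Module.finrank ℝ R + 2 = Module.finrank ℝ (Module.Dual ℝ V) := by
  have hB : B.IsAlt := fun v => by linarith [hskew v v]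
  have hmin : ∀ W < R.dualCoannihilator, B.IsIsotropic W := fun W hW => by
    simpa only [IsIsotropic, Subspace.dualAnnihilator_dualCoannihilator_eq] using
      hmax _ (lt_dualAnnihilator_of_lt_dualCoannihilator hW)
  rw [← hB.finrank_eq_two_of_minimal_not_isIsotropic hpoor hmin,
    Subspace.finrank_add_finrank_dualCoannihilator_eq, Subspace.dual_finrank_eq]

/-- In a finite-dimensional symplectic real vector space `(V, B)`, a maximal
poor subspace `R ⊆ V*` (i.e. `Ann R` is not isotropic, but `Ann R'` is
isotropic for every subspace `R'` strictly containing `R`) has codimension 2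
in `V*`. -/
theorem maximal_poor_codim_two
    (V : Type*) [AddCommGroup V] [Module ℝ V] [FiniteDimensional ℝ V]
    (B : V →ₗ[ℝ] V →ₗ[ℝ] ℝ)
    (hskew : ∀ u v : V, B u v = - B v u)
    (hnd : ∀ v : V, (∀ w : V, B v w = 0) → v = 0)
    (R : Submodule ℝ (Module.Dual ℝ V))
    (hpoor : ¬ (∀ x ∈ R.dualCoannihilator, ∀ y ∈ R.dualCoannihilator, B x y = 0))
    (hmax : ∀ R' : Submodule ℝ (Module.Dual ℝ V), R < R' →
      (∀ x ∈ R'.dualCoannihilator, ∀ y ∈ R'.dualCoannihilator, B x y = 0)) :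
    Module.finrank ℝ R + 2 = Module.finrank ℝ (Module.Dual ℝ V) :=
  maximal_poor_codim_two_general V B hskew R hpoor hmax
end

section
/- Define SAF(π, a) = Σ_{i<j} (a_i ∧_ℚ a_j - a_{π(i)} ∧_ℚ a_{π(j)}) ∈ ℝ ∧_ℚ ℝ. Then the two formulas for the SAF invariant agree: Σ_{i=1}^n a_i ∧_ℚ (x̃_{π⁻¹(i)} - x_i) = Σ_{i<j} (a_i ∧_ℚ a_j - a_{π(i)} ∧_ℚ a_{π(j)}), where x_i = Σ_{j≤i} a_j and x̃_i = Σ_{j≤i} a_{π(j)}. -/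
/-!
Writing `x_i` and `x̃_{π⁻¹(i)}` as sums, the left-hand side becomes
`∑_{j ≤ i} a_{π(i)} ∧ a_{π(j)} - ∑_{j ≤ i} a_i ∧ a_j` after relabelling `i ↦ π(i)`. In a linear
order `j ≤ i` is the negation of `i < j`, so each of these sums is the full double sum (the same
for `a` and `a ∘ π`) minus the corresponding sum over `i < j`.
-/

/-- The wedge product `a ∧_ℚ b` in the exterior square of `ℝ` as a `ℚ`-vector
space (realized inside the exterior algebra of `ℝ` over `ℚ`). -/
noncomputable def wedgeQ (a b : ℝ) : ExteriorAlgebra ℚ ℝ :=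
  ExteriorAlgebra.ι ℚ a * ExteriorAlgebra.ι ℚ b

/-- The SAF invariant `SAF(π,a) = ∑_{i<j} (a_i ∧ a_j - a_{π(i)} ∧ a_{π(j)})`. -/
noncomputable def SAF {n : ℕ} (π : Equiv.Perm (Fin n)) (a : Fin n → ℝ) :
    ExteriorAlgebra ℚ ℝ :=
  ∑ i : Fin n, ∑ j : Fin n,
    if i < j then wedgeQ (a i) (a j) - wedgeQ (a (π i)) (a (π j)) else 0

/-- `X a i` is the partial sum `a_1 + ⋯ + a_i`. -/
noncomputable def X {n : ℕ} (a : Fin n → ℝ) (i : ℕ) : ℝ :=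
  ∑ j : Fin n, if (j : ℕ) < i then a j else 0

open Finset

section DoubleSums

variable {ι G : Type*} [Fintype ι] [AddCommGroup G]

theorem sum_sum_comp_perm (f : ι → ι → G) (π : Equiv.Perm ι) :
    ∑ i, ∑ j, f (π i) (π j) = ∑ i, ∑ j, f i j := by
  simp only [Equiv.sum_comp π (f _), Equiv.sum_comp π (fun i => ∑ j, f i j)]

section LinearOrder

variable [LinearOrder ι]

theorem sum_sum_ite_le_eq_sub_sum_sum_ite_lt (f : ι → ι → G) :
    ∑ i, ∑ j, (if j ≤ i then f i j else 0) =
      ∑ i, ∑ j, f i j - ∑ i, ∑ j, if i < j then f i j else 0 := by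
  simp only [← sum_sub_distrib, ← not_lt]
  refine sum_congr rfl fun i _ => sum_congr rfl fun j _ => ?_
  split_ifs <;> simp

theorem sum_sum_ite_le_comp_perm_sub (f : ι → ι → G) (π : Equiv.Perm ι) :
    ∑ i, ∑ j, (if j ≤ i then f (π i) (π j) else 0) - ∑ i, ∑ j, (if j ≤ i then f i j else 0) =
      ∑ i, ∑ j, if i < j then f i j - f (π i) (π j) else 0 := by
  simp only [sum_sum_ite_le_eq_sub_sum_sum_ite_lt, sum_sum_comp_perm f π,
    sub_sub_sub_cancel_left, ← sum_sub_distrib, ite_sub_ite, sub_zero]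

end LinearOrder

end DoubleSums

theorem wedgeQ_sub (x y z : ℝ) : wedgeQ x (y - z) = wedgeQ x y - wedgeQ x z := by
  simp [wedgeQ, mul_sub]

theorem wedgeQ_X_succ {n : ℕ} (x : ℝ) (b : Fin n → ℝ) (k : Fin n) :
    wedgeQ x (X b (k + 1)) = ∑ j, if j ≤ k then wedgeQ x (b j) else 0 := by
  simp only [wedgeQ, X, map_sum, mul_sum, Nat.lt_succ_iff, Fin.le_def]
  refine sum_congr rfl fun j _ => ?_
  split_ifs <;> simp

/-- The two formulas for the SAF invariant agree:
`∑ i, a_i ∧ (x̃_{π⁻¹(i)} - x_i) = ∑_{i<j} (a_i ∧ a_j - a_{π(i)} ∧ a_{π(j)})`,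
where `x_i = a_1+⋯+a_i` and `x̃_i = a_{π(1)}+⋯+a_{π(i)}`. -/
theorem saf_formulas_agree {n : ℕ} (π : Equiv.Perm (Fin n)) (a : Fin n → ℝ) :
    ∑ i : Fin n,
        wedgeQ (a i) (X (a ∘ π) (((π.symm i : Fin n) : ℕ) + 1) - X a ((i : ℕ) + 1)) =
      SAF π a := by
  calc _ = ∑ i, ∑ j, (if j ≤ π.symm i then wedgeQ (a i) (a (π j)) else 0)
          - ∑ i, ∑ j, (if j ≤ i then wedgeQ (a i) (a j) else 0) := by
        simp only [wedgeQ_sub, wedgeQ_X_succ, sum_sub_distrib, Function.comp_apply]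
    _ = ∑ i, ∑ j, (if j ≤ i then wedgeQ (a (π i)) (a (π j)) else 0)
          - ∑ i, ∑ j, (if j ≤ i then wedgeQ (a i) (a j) else 0) := by
        rw [← Equiv.sum_comp π (fun i => ∑ j, if j ≤ π.symm i then _ else 0)]
        simp only [Equiv.symm_apply_apply]
    _ = SAF π a := sum_sum_ite_le_comp_perm_sub (fun i j => wedgeQ (a i) (a j)) π
end
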